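/- arXiv:1811.05236 — 3 statements merged into one kernel-verified Lean document; each statement's English description precedes it below -/
import Mathlib

section
/- The generic-extension product of LR-pairs is associative: for all LR-pairs X, Y, Z one has X*(Y*Z) = (X*Y)*Z (equality of LR-pairs, i.e. both the γ-partitions and the β-partitions coincide). -/
open Module

namespace LRGE

/-! ### Partitions and combinatorics of LR-pairs -/

/-- `f : ℕ → ℕ` is a partition: weakly decreasing with finitely many nonzero parts.
Part `i+1` of the partition is `f i` (0-indexed). -/
def IsPartition (f : ℕ → ℕ) : Prop := Antitone f ∧ ∃ N, ∀ n, N ≤ n → f n = 0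

/-- Sum of the first `k` parts of `f`, i.e. `Σ_{i=1}^k f_i`. -/
def psum (f : ℕ → ℕ) (k : ℕ) : ℕ := ∑ i ∈ Finset.range k, f i

/-- The number of (nonzero) parts of a partition. -/
noncomputable def numParts (f : ℕ → ℕ) : ℕ := Set.ncard {i | f i ≠ 0}

/-- `n(λ) = Σ_i (i-1) λ_i` (with 1-indexed parts; here `f i` is part `i+1`). -/
noncomputable def nstat (f : ℕ → ℕ) : ℕ := ∑ᶠ i, i * f i

/-- The partial sums of the β-partition of the generic extension `Y * X`,
where `X` has pair `(γX, βX)` and `Y` has pair `(γY, βY)`: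
`Σ_{i=1}^k δ_i = Σ_{i=1}^k (βX_i + γY_i) + min (max (0, k - ℓ)) (Σ_{i=1}^k (βY_i - γY_i))`. -/
noncomputable def gbsum (βX γY βY : ℕ → ℕ) (k : ℕ) : ℕ :=
  (psum βX k + psum γY k) + min (k - numParts βX) (∑ i ∈ Finset.range k, (βY i - γY i))

/-- The parts of the β-partition of the generic extension `Y * X`. -/
noncomputable def geBeta (βX γY βY : ℕ → ℕ) : ℕ → ℕ :=
  fun i => gbsum βX γY βY (i + 1) - gbsum βX γY βY i

/-- An LR-pair `(γ, β)`: both partitions and `γ_i ≤ β_i ≤ γ_i + 1` for all `i`. -/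
def IsLRPair (γ β : ℕ → ℕ) : Prop :=
  IsPartition γ ∧ IsPartition β ∧ ∀ i, γ i ≤ β i ∧ β i ≤ γ i + 1

/-- the generic extension product on pairs `(γ, β)`: `gext Y X = Y * X`. -/
noncomputable def gext (Y X : (ℕ → ℕ) × (ℕ → ℕ)) : (ℕ → ℕ) × (ℕ → ℕ) :=
  (fun i => X.1 i + Y.1 i, geBeta X.2 Y.1 Y.2)

/-- The empty LR-pair (the class of the zero object). -/
def punit : (ℕ → ℕ) × (ℕ → ℕ) := (fun _ => 0, fun _ => 0)

/-- `m`-fold iterated generic extension product of a pair with itself. -/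
noncomputable def gpow (p : (ℕ → ℕ) × (ℕ → ℕ)) : ℕ → (ℕ → ℕ) × (ℕ → ℕ)
  | 0 => punit
  | 1 => p
  | n + 2 => gext p (gpow p (n + 1))

/-- The partition `(1^n)`. -/
def ones (n : ℕ) : ℕ → ℕ := fun i => if i < n then 1 else 0

/-- The partition with a single part `m` (empty if `m = 0`). -/
def single (m : ℕ) : ℕ → ℕ := fun i => if i = 0 then m else 0

/-- The LR-pair of the picket `P_1^1`, namely `(∅, (1))`. -/
def p11 : (ℕ → ℕ) × (ℕ → ℕ) := (fun _ => 0, single 1)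

/-- The LR-pair of the picket `P_0^1`, namely `((1), (1))`. -/
def p01 : (ℕ → ℕ) × (ℕ → ℕ) := (single 1, single 1)

/-- The dominance order on pairs of partitions: `P ⊴ Q` iff all partial sums of `P`
are at least those of `Q` (both for the γ- and the β-partitions). -/
def domLE (P Q : (ℕ → ℕ) × (ℕ → ℕ)) : Prop :=
  ∀ k, 1 ≤ k → psum Q.1 k ≤ psum P.1 k ∧ psum Q.2 k ≤ psum P.2 k

/-- The partition (as a function `ℕ → ℕ`, parts in weakly decreasing order) whose
multiset of parts is the given multiset. -/
noncomputable def partOf (M : Multiset ℕ) : ℕ → ℕ :=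
  fun i => ((M.sort (· ≤ ·)).reverse.getD i 0)

/-! ### Nilpotent linear operators and the category `S` -/

variable (K : Type) [Field K]

/-- The nilpotent `K[T]`-module `N_λ`. -/
abbrev NMod (lam : ℕ → ℕ) : Type := ∀ i : ℕ, Fin (lam i) → K

/-- Multiplication by `T` on `N_λ`. -/
def shiftMap (lam : ℕ → ℕ) : NMod K lam →ₗ[K] NMod K lam where
  toFun v := fun i j => if h : (j : ℕ) + 1 < lam i then v i ⟨(j : ℕ) + 1, h⟩ else 0
  map_add' u v := by
    funext i j
    by_cases h : (j : ℕ) + 1 < lam i <;> simp [h]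
  map_smul' c v := by
    funext i j
    by_cases h : (j : ℕ) + 1 < lam i <;> simp [h]

/-- Multiplication by `T` on the single Jordan block `N_(m)`, realized on `Fin m → K`. -/
def sh (m : ℕ) : (Fin m → K) →ₗ[K] (Fin m → K) where
  toFun v := fun j => if h : (j : ℕ) + 1 < m then v ⟨(j : ℕ) + 1, h⟩ else 0
  map_add' u v := by
    funext j
    by_cases h : (j : ℕ) + 1 < m <;> simp [h]
  map_smul' c v := by
    funext j
    by_cases h : (j : ℕ) + 1 < m <;> simp [h]

/-- The inclusion `ι : N_(1) → N_(m)` with `ι(1) = T^(m-1)` (the socle generator,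
realized as the basis vector with index `0`). -/
def iota (m : ℕ) : (Fin 1 → K) →ₗ[K] (Fin m → K) where
  toFun v := fun j => if (j : ℕ) = 0 then v 0 else 0
  map_add' u v := by
    funext j
    by_cases h : (j : ℕ) = 0 <;> simp [h]
  map_smul' c v := by
    funext j
    by_cases h : (j : ℕ) = 0 <;> simp [h]

/-- The Jordan type of the nilpotent operator `φ` is the partition `lam`:
`(V, φ)` is isomorphic to `N_lam` as a `K[T]`-module. -/
def JordanType {V : Type} [AddCommGroup V] [Module K V]
    (φ : V →ₗ[K] V) (lam : ℕ → ℕ) : Prop :=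
  IsPartition lam ∧ ∃ e : V ≃ₗ[K] NMod K lam, ∀ v, e (φ v) = shiftMap K lam (e v)

/-- The Jordan type of `coker f` (with the operator induced by `φ`) is the partition `γ`:
there is a `K[T]`-epimorphism `q : V₂ → N_γ` with kernel exactly the image of `f`. -/
def CokerType {V₁ V₂ : Type} [AddCommGroup V₁] [Module K V₁]
    [AddCommGroup V₂] [Module K V₂]
    (f : V₁ →ₗ[K] V₂) (φ : V₂ →ₗ[K] V₂) (γ : ℕ → ℕ) : Prop :=
  IsPartition γ ∧ ∃ q : V₂ →ₗ[K] NMod K γ,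
    Function.Surjective q ∧ LinearMap.ker q = LinearMap.range f ∧
    q ∘ₗ φ = shiftMap K γ ∘ₗ q

/-- The space `Hom_S(X, X')` of morphisms between the triples
`X = (V₁, V₂, f)` (with operators `φ₁, φ₂`) and `X' = (W₁, W₂, g)` (with operators
`ψ₁, ψ₂`): pairs `(p₁, p₂)` of `K[T]`-homomorphisms with `g ∘ p₁ = p₂ ∘ f`. -/
def homS {V₁ V₂ W₁ W₂ : Type}
    [AddCommGroup V₁] [Module K V₁] [AddCommGroup V₂] [Module K V₂]
    [AddCommGroup W₁] [Module K W₁] [AddCommGroup W₂] [Module K W₂]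
    (φ₁ : V₁ →ₗ[K] V₁) (φ₂ : V₂ →ₗ[K] V₂) (f : V₁ →ₗ[K] V₂)
    (ψ₁ : W₁ →ₗ[K] W₁) (ψ₂ : W₂ →ₗ[K] W₂) (g : W₁ →ₗ[K] W₂) :
    Submodule K ((V₁ →ₗ[K] W₁) × (V₂ →ₗ[K] W₂)) where
  carrier := {p | p.1 ∘ₗ φ₁ = ψ₁ ∘ₗ p.1 ∧ p.2 ∘ₗ φ₂ = ψ₂ ∘ₗ p.2 ∧
    g ∘ₗ p.1 = p.2 ∘ₗ f}
  add_mem' := by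
    intro p q hp hq
    obtain ⟨h1, h2, h3⟩ := hp
    obtain ⟨k1, k2, k3⟩ := hq
    refine ⟨?_, ?_, ?_⟩
    · simp only [Prod.fst_add, LinearMap.add_comp, LinearMap.comp_add, h1, k1]
    · simp only [Prod.snd_add, LinearMap.add_comp, LinearMap.comp_add, h2, k2]
    · simp only [Prod.fst_add, Prod.snd_add, LinearMap.add_comp, LinearMap.comp_add, h3, k3]
  zero_mem' := by
    refine ⟨?_, ?_, ?_⟩ <;>
      simp only [Prod.fst_zero, Prod.snd_zero, LinearMap.zero_comp, LinearMap.comp_zero]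
  smul_mem' := by
    intro c p hp
    obtain ⟨h1, h2, h3⟩ := hp
    refine ⟨?_, ?_, ?_⟩
    · simp only [Prod.smul_fst, LinearMap.smul_comp, LinearMap.comp_smul, h1]
    · simp only [Prod.smul_snd, LinearMap.smul_comp, LinearMap.comp_smul, h2]
    · simp only [Prod.smul_fst, Prod.smul_snd, LinearMap.smul_comp, LinearMap.comp_smul, h3]

/-- `Z = (Z₁, Z₂, fZ)` is an extension of `Y = (Y₁, Y₂, fY)` by `X = (X₁, X₂, fX)`:
there is a short exact sequence `0 → X → Z → Y → 0` in `S`, i.e. morphisms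
`u : X → Z` and `p : Z → Y` whose component sequences are short exact sequences
of `K[T]`-modules. -/
def IsExt {X₁ X₂ Z₁ Z₂ Y₁ Y₂ : Type}
    [AddCommGroup X₁] [Module K X₁] [AddCommGroup X₂] [Module K X₂]
    [AddCommGroup Z₁] [Module K Z₁] [AddCommGroup Z₂] [Module K Z₂]
    [AddCommGroup Y₁] [Module K Y₁] [AddCommGroup Y₂] [Module K Y₂]
    (φX₁ : X₁ →ₗ[K] X₁) (φX₂ : X₂ →ₗ[K] X₂) (fX : X₁ →ₗ[K] X₂)
    (φZ₁ : Z₁ →ₗ[K] Z₁) (φZ₂ : Z₂ →ₗ[K] Z₂) (fZ : Z₁ →ₗ[K] Z₂)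
    (φY₁ : Y₁ →ₗ[K] Y₁) (φY₂ : Y₂ →ₗ[K] Y₂) (fY : Y₁ →ₗ[K] Y₂) : Prop :=
  ∃ (u₁ : X₁ →ₗ[K] Z₁) (u₂ : X₂ →ₗ[K] Z₂) (p₁ : Z₁ →ₗ[K] Y₁) (p₂ : Z₂ →ₗ[K] Y₂),
    u₁ ∘ₗ φX₁ = φZ₁ ∘ₗ u₁ ∧ u₂ ∘ₗ φX₂ = φZ₂ ∘ₗ u₂ ∧ fZ ∘ₗ u₁ = u₂ ∘ₗ fX ∧
    p₁ ∘ₗ φZ₁ = φY₁ ∘ₗ p₁ ∧ p₂ ∘ₗ φZ₂ = φY₂ ∘ₗ p₂ ∧ fY ∘ₗ p₁ = p₂ ∘ₗ fZ ∧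
    Function.Injective u₁ ∧ Function.Injective u₂ ∧
    Function.Surjective p₁ ∧ Function.Surjective p₂ ∧
    LinearMap.range u₁ = LinearMap.ker p₁ ∧ LinearMap.range u₂ = LinearMap.ker p₂

end LRGE

namespace LRGE

/-! ### Auxiliary lemmas for associativity -/

/-- Sum of pointwise truncated differences over an initial range. -/
private def bsum (f g : ℕ → ℕ) (k : ℕ) : ℕ := ∑ i ∈ Finset.range k, (f i - g i)

private lemma psum_succ (f : ℕ → ℕ) (k : ℕ) : psum f (k + 1) = psum f k + f k :=
  Finset.sum_range_succ f k

private lemma bsum_succ (f g : ℕ → ℕ) (k : ℕ) :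
    bsum f g (k + 1) = bsum f g k + (f k - g k) :=
  Finset.sum_range_succ _ k

private lemma gbsum_eq (a b c : ℕ → ℕ) (k : ℕ) :
    gbsum a b c k = psum a k + psum b k + min (k - numParts a) (bsum c b k) := rfl

private lemma geBeta_eq (a b c : ℕ → ℕ) (i : ℕ) :
    geBeta a b c i = gbsum a b c (i + 1) - gbsum a b c i := rfl

private lemma gbsum_le_succ (a b c : ℕ → ℕ) (k : ℕ) :
    gbsum a b c k ≤ gbsum a b c (k + 1) := by
  rw [gbsum_eq, gbsum_eq, psum_succ, psum_succ, bsum_succ]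
  omega

private lemma psum_geBeta (a b c : ℕ → ℕ) (k : ℕ) :
    psum (geBeta a b c) k = gbsum a b c k := by
  induction k with
  | zero => simp [psum, gbsum_eq, psum_succ, bsum]
  | succ n ih =>
    have h := gbsum_le_succ a b c n
    rw [psum_succ, ih, geBeta_eq]
    omega

private lemma geBeta_ge (a b c : ℕ → ℕ) (i : ℕ) :
    a i + b i ≤ geBeta a b c i := by
  rw [geBeta_eq, gbsum_eq, gbsum_eq, psum_succ, psum_succ, bsum_succ]
  omega

private lemma ncard_setOf_lt (m : ℕ) : Set.ncard {i : ℕ | i < m} = m := by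
  rw [show {i : ℕ | i < m} = ↑(Finset.range m) by ext i; simp]
  rw [Set.ncard_coe_finset, Finset.card_range]

private lemma numParts_eq_of_iff {f : ℕ → ℕ} {m : ℕ} (h : ∀ i, f i ≠ 0 ↔ i < m) :
    numParts f = m := by
  unfold numParts
  rw [show {i | f i ≠ 0} = {i : ℕ | i < m} by ext i; simpa using h i]
  exact ncard_setOf_lt m

private lemma partition_support {f : ℕ → ℕ} (hf : IsPartition f) (i : ℕ) :
    f i ≠ 0 ↔ i < numParts f := by
  obtain ⟨hanti, N, hN⟩ := hf
  have hne : {k | f k = 0}.Nonempty := ⟨N, hN N le_rfl⟩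
  have key : ∀ j, f j ≠ 0 ↔ j < sInf {k | f k = 0} := by
    intro j
    constructor
    · intro hj
      by_contra h
      push_neg at h
      have h1 : f j ≤ f (sInf {k | f k = 0}) := hanti h
      have h2 : f (sInf {k | f k = 0}) = 0 := Nat.sInf_mem hne
      omega
    · intro hj h0
      exact Nat.notMem_of_lt_sInf hj h0
  rw [numParts_eq_of_iff key]
  exact key i

private lemma bsum_const {f g : ℕ → ℕ} (hf : IsPartition f) {k : ℕ}
    (hk : numParts f ≤ k) : bsum f g k = bsum f g (numParts f) := by
  induction k, hk using Nat.le_induction with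
  | base => rfl
  | succ n hn ih =>
    have h0 : f n = 0 := by
      by_contra h
      have := (partition_support hf n).mp h
      omega
    rw [bsum_succ, ih, h0]
    simp

private lemma bsum_le_const {f g : ℕ → ℕ} (hf : IsPartition f) (k : ℕ) :
    bsum f g k ≤ bsum f g (numParts f) := by
  rcases le_total k (numParts f) with h | h
  · exact Finset.sum_le_sum_of_subset (Finset.range_subset_range.mpr h)
  · rw [bsum_const hf h]

private lemma bsum_add_psum {f g : ℕ → ℕ} (h : ∀ i, g i ≤ f i) (k : ℕ) :
    bsum f g k + psum g k = psum f k := by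
  induction k with
  | zero => rfl
  | succ n ih =>
    have := h n
    rw [bsum_succ, psum_succ, psum_succ]
    omega

private lemma numParts_geBeta {γY βY βZ : ℕ → ℕ}
    (hY : IsPartition βY) (hYle : ∀ i, γY i ≤ βY i) (hZ : IsPartition βZ) :
    numParts (geBeta βZ γY βY) =
      max (numParts βY) (numParts βZ + bsum βY γY (numParts βY)) := by
  set lY := numParts βY with hlY
  set lZ := numParts βZ with hlZ
  set R := bsum βY γY lY with hR
  apply numParts_eq_of_iff
  intro i
  have hdelta : geBeta βZ γY βY i =
      βZ i + γY i +
        (min (i + 1 - lZ) (bsum βY γY (i + 1)) - min (i - lZ) (bsum βY γY i)) := by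
    rw [geBeta_eq, gbsum_eq, gbsum_eq, psum_succ, psum_succ, bsum_succ]
    have := bsum_succ βY γY i
    omega
  constructor
  · intro hne
    rw [hdelta] at hne
    by_contra hge
    push_neg at hge
    have hiY : lY ≤ i := le_trans (le_max_left _ _) hge
    have hiZR : lZ + R ≤ i := le_trans (le_max_right _ _) hge
    have hbZ : βZ i = 0 := by
      by_contra h
      have := (partition_support hZ i).mp h
      omega
    have hbY : βY i = 0 := by
      by_contra h
      have := (partition_support hY i).mp h
      omega
    have hgY : γY i = 0 := by have := hYle i; omega
    have h1 : bsum βY γY i = R := bsum_const hY hiY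
    have h2 : bsum βY γY (i + 1) = R := bsum_const hY (by omega)
    omega
  · intro hlt
    rw [hdelta]
    by_cases hZi : i < lZ
    · have : βZ i ≠ 0 := (partition_support hZ i).mpr hZi
      omega
    push_neg at hZi
    by_cases hgYi : γY i ≠ 0
    · omega
    push_neg at hgYi
    by_cases hiY : i < lY
    · have hbYi : βY i ≠ 0 := (partition_support hY i).mpr hiY
      have h3 := bsum_succ βY γY i
      omega
    · push_neg at hiY
      have h1 : bsum βY γY i = R := bsum_const hY hiY
      have h2 : bsum βY γY (i + 1) = R := bsum_const hY (by omega)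
      omega

private lemma gbsum_assoc {γX βX γY βY γZ βZ : ℕ → ℕ}
    (hX : IsLRPair γX βX) (hY : IsLRPair γY βY) (hZ : IsLRPair γZ βZ) (k : ℕ) :
    gbsum (geBeta βZ γY βY) γX βX k
      = gbsum βZ (fun i => γY i + γX i) (geBeta βY γX βX) k := by
  have hηge : ∀ i, γY i + γX i ≤ geBeta βY γX βX i := by
    intro i
    have h1 := (hY.2.2 i).1
    have h2 := geBeta_ge βY γX βX i
    omega
  have e1 : bsum (geBeta βY γX βX) (fun i => γY i + γX i) k
        + psum (fun i => γY i + γX i) k = psum (geBeta βY γX βX) k :=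
    bsum_add_psum hηge k
  have e2 : psum (geBeta βY γX βX) k
      = psum βY k + psum γX k + min (k - numParts βY) (bsum βX γX k) := by
    rw [psum_geBeta, gbsum_eq]
  have e3 : psum (geBeta βZ γY βY) k
      = psum βZ k + psum γY k + min (k - numParts βZ) (bsum βY γY k) := by
    rw [psum_geBeta, gbsum_eq]
  have e4 : bsum βY γY k + psum γY k = psum βY k :=
    bsum_add_psum (fun i => (hY.2.2 i).1) k
  have e5 : psum (fun i => γY i + γX i) k = psum γY k + psum γX k :=
    Finset.sum_add_distrib
  have e6 : numParts (geBeta βZ γY βY)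
      = max (numParts βY) (numParts βZ + bsum βY γY (numParts βY)) :=
    numParts_geBeta hY.2.1 (fun i => (hY.2.2 i).1) hZ.2.1
  have h1 : bsum βY γY k ≤ bsum βY γY (numParts βY) := bsum_le_const hY.2.1 k
  rw [gbsum_eq, gbsum_eq]
  rcases le_or_gt (numParts βY) k with hk | hk
  · have h2 : bsum βY γY k = bsum βY γY (numParts βY) := bsum_const hY.2.1 hk
    omega
  · omega

/-- The generic-extension product of LR-pairs is associative:
`X*(Y*Z) = (X*Y)*Z`. -/
theorem gext_assoc (X Y Z : (ℕ → ℕ) × (ℕ → ℕ))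
    (hX : IsLRPair X.1 X.2) (hY : IsLRPair Y.1 Y.2) (hZ : IsLRPair Z.1 Z.2) :
    gext X (gext Y Z) = gext (gext X Y) Z := by
  have hkey := gbsum_assoc (γZ := Z.1) hX hY hZ
  unfold gext
  dsimp only
  congr 1
  · funext i
    ring
  · funext i
    rw [geBeta_eq, geBeta_eq, hkey, hkey]

end LRGE
end

section
/- The monoid of LR-pairs under the generic-extension product * (with identity the empty pair (∅, ∅)) is generated by the set { ((0), (1)) } ∪ { ((1^n), (1^n)) : n ≥ 1 }; that is, every LR-pair can be written as a finite iterated *-product of the pair of P_1^1, namely (γ, β) with γ = ∅ and β = (1), and of the pairs of (P_0^1)^{⊕n}, namely γ = β = (1,1,…,1) with n parts, for n ≥ 1. -/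
open Module

namespace LRGE

lemma numParts_eq (f : ℕ → ℕ) (n : ℕ) (h : ∀ i, f i ≠ 0 ↔ i < n) :
    numParts f = n := by
  have hs : {i | f i ≠ 0} = ↑(Finset.range n) := by
    ext i; simp only [Set.mem_setOf_eq, Finset.coe_range, Set.mem_Iio]; exact h i
  rw [numParts, hs, Set.ncard_coe_finset, Finset.card_range]

lemma numParts_spec (f : ℕ → ℕ) (hf : IsPartition f) :
    ∀ i, f i ≠ 0 ↔ i < numParts f := by
  obtain ⟨ha, N, hN⟩ := hf
  have hex : ∃ i, f i = 0 := ⟨N, hN N le_rfl⟩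
  have key : ∀ i, f i ≠ 0 ↔ i < Nat.find hex := by
    intro i
    constructor
    · intro hi
      by_contra hlt
      push_neg at hlt
      have h1 : f i ≤ f (Nat.find hex) := ha hlt
      rw [Nat.find_spec hex] at h1
      omega
    · intro hi
      exact Nat.find_min hex hi
  have heq := numParts_eq f (Nat.find hex) key
  intro i; rw [heq]; exact key i

lemma psum_ones (n k : ℕ) : psum (ones n) k = min k n := by
  induction k with
  | zero => simp [psum]
  | succ k ih =>
    rw [psum, Finset.sum_range_succ, ← psum, ih]
    unfold ones
    split_ifs with h <;> omega

lemma geBeta_eq_s15 (βX γY βY g : ℕ → ℕ)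
    (h : ∀ k, gbsum βX γY βY k = psum g k) :
    geBeta βX γY βY = g := by
  funext i
  rw [geBeta, h, h, psum, psum, Finset.sum_range_succ]
  omega

lemma geBeta_ones (β : ℕ → ℕ) (n : ℕ) :
    geBeta β (ones n) (ones n) = fun i => β i + ones n i := by
  apply geBeta_eq_s15
  intro k
  rw [gbsum]
  simp only [Nat.sub_self, Finset.sum_const_zero, Nat.min_zero, add_zero]
  rw [psum, psum, psum, ← Finset.sum_add_distrib]

lemma geBeta_p11 (β : ℕ → ℕ) :
    geBeta β (fun _ => 0) (single 1) =
      fun i => β i + if i = numParts β then 1 else 0 := by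
  apply geBeta_eq_s15
  intro k
  rw [gbsum]
  have h1 : psum (fun _ => 0) k = 0 := by simp [psum]
  have h2 : (∑ i ∈ Finset.range k, (single 1 i - (fun _ => (0:ℕ)) i))
      = if 0 < k then 1 else 0 := by
    simp only [Nat.sub_zero, single]
    rw [Finset.sum_ite_eq' (Finset.range k) 0 (fun _ => 1)]
    simp [Finset.mem_range]
  have h3 : psum (fun i => β i + if i = numParts β then 1 else 0) k
      = psum β k + if numParts β < k then 1 else 0 := by
    rw [psum, psum, Finset.sum_add_distrib,
      Finset.sum_ite_eq' (Finset.range k) (numParts β) (fun _ => 1)]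
    simp [Finset.mem_range]
  rw [h1, h2, h3]
  split_ifs <;> omega

lemma gext_ones (n : ℕ) (γ β : ℕ → ℕ) :
    gext (ones n, ones n) (γ, β)
      = (fun i => γ i + ones n i, fun i => β i + ones n i) := by
  rw [gext]
  exact Prod.ext rfl (geBeta_ones β n)

lemma gext_p11 (γ β : ℕ → ℕ) :
    gext p11 (γ, β) = (γ, fun i => β i + if i = numParts β then 1 else 0) := by
  rw [gext]
  refine Prod.ext ?_ (geBeta_p11 β)
  funext i
  simp [p11]

lemma main_aux : ∀ s N γ β, IsLRPair γ β → (∀ n, N ≤ n → β n = 0) →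
    psum β N ≤ s →
    ∃ L : List ((ℕ → ℕ) × (ℕ → ℕ)),
      (∀ p ∈ L, p = p11 ∨ ∃ n, 1 ≤ n ∧ p = (ones n, ones n)) ∧
      L.foldr gext punit = (γ, β) := by
  intro s
  induction s with
  | zero =>
    intro N γ β h hN hs
    obtain ⟨hγp, hβp, hlr⟩ := h
    have hβ : ∀ i, β i = 0 := by
      intro i
      rcases lt_or_ge i N with hi | hi
      · have hz : psum β N = 0 := Nat.le_zero.mp hs
        rw [psum] at hz
        exact Finset.sum_eq_zero_iff.mp hz i (Finset.mem_range.mpr hi)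
      · exact hN i hi
    refine ⟨[], by simp, ?_⟩
    have hγ : ∀ i, γ i = 0 := fun i => by have := (hlr i).1; have := hβ i; omega
    simp only [List.foldr_nil, punit]
    exact Prod.ext (funext fun i => (hγ i).symm) (funext fun i => (hβ i).symm)
  | succ s ih =>
    intro N γ β h hN hs
    obtain ⟨hγp, hβp, hlr⟩ := h
    have specβ := numParts_spec β hβp
    have specγ := numParts_spec γ hγp
    set ℓ := numParts β with hℓdef
    by_cases hβ0 : ℓ = 0
    · -- β is zero
      have hβ : ∀ i, β i = 0 := by
        intro i
        by_contra hne
        have := (specβ i).mp hne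
        omega
      refine ⟨[], by simp, ?_⟩
      have hγ : ∀ i, γ i = 0 := fun i => by have := (hlr i).1; have := hβ i; omega
      simp only [List.foldr_nil, punit]
      exact Prod.ext (funext fun i => (hγ i).symm) (funext fun i => (hβ i).symm)
    · have hℓ1 : 1 ≤ ℓ := Nat.one_le_iff_ne_zero.mpr hβ0
      set j := ℓ - 1 with hjdef
      have hjℓ : j < ℓ := by omega
      have hβj : β j ≠ 0 := (specβ j).mpr hjℓ
      have hβhigh : ∀ i, ℓ ≤ i → β i = 0 := by
        intro i hi
        by_contra hne
        have := (specβ i).mp hne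
        omega
      have hjN : j < N := by
        by_contra hc
        exact hβj (hN j (by omega))
      by_cases hγj : γ j = 0
      · -- peel off a p11
        have hβj1 : β j = 1 := by have := (hlr j).2; omega
        have hγ0 : ∀ i, j ≤ i → γ i = 0 := by
          intro i hi
          have h1 : γ i ≤ γ j := hγp.1 hi
          omega
        set βX : ℕ → ℕ := fun i => if i < j then β i else 0 with hβXdef
        have hβXval : ∀ i, β i = βX i + if i = j then 1 else 0 := by
          intro i
          simp only [hβXdef]
          rcases lt_trichotomy i j with h' | h' | h'
          · rw [if_pos h', if_neg (by omega)]
            omega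
          · subst h'
            rw [if_neg (by omega), if_pos rfl]
            omega
          · have hb0 : β i = 0 := hβhigh i (by omega)
            rw [if_neg (by omega), if_neg (by omega)]
            omega
        have hβXpart : IsPartition βX := by
          constructor
          · intro a b hab
            have h1 : β b ≤ β a := hβp.1 hab
            simp only [hβXdef]
            split_ifs with h2 h3
            · exact h1
            · omega
            · exact Nat.zero_le _
            · exact le_rfl
          · exact ⟨j, fun n hn => by simp only [hβXdef]; rw [if_neg (by omega)]⟩
        have hLRX : IsLRPair γ βX := by
          refine ⟨hγp, hβXpart, ?_⟩
          intro i
          have h1 := hlr i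
          simp only [hβXdef]
          split_ifs with h2
          · exact h1
          · have := hγ0 i (by omega)
            omega
        have hnpX : numParts βX = j := by
          apply numParts_eq
          intro i
          simp only [hβXdef]
          constructor
          · intro hi
            by_contra hc
            rw [if_neg hc] at hi
            exact hi rfl
          · intro hi
            rw [if_pos hi]
            exact (specβ i).mpr (by omega)
        have hNX : ∀ n, N ≤ n → βX n = 0 := by
          intro n hn
          simp only [hβXdef]
          rw [if_neg (by omega)]
        have hsum : psum β N = psum βX N + 1 := by
          rw [psum, psum]
          calc ∑ i ∈ Finset.range N, β i
              = ∑ i ∈ Finset.range N, (βX i + if i = j then 1 else 0) :=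
                Finset.sum_congr rfl (fun i _ => hβXval i)
            _ = (∑ i ∈ Finset.range N, βX i)
                + ∑ i ∈ Finset.range N, (if i = j then 1 else 0) :=
                Finset.sum_add_distrib
            _ = (∑ i ∈ Finset.range N, βX i) + 1 := by
                rw [Finset.sum_ite_eq' (Finset.range N) j (fun _ => 1),
                  if_pos (Finset.mem_range.mpr hjN)]
        obtain ⟨L', hL', hfold⟩ := ih N γ βX hLRX hNX (by omega)
        refine ⟨p11 :: L', ?_, ?_⟩
        · intro p hp
          rcases List.mem_cons.mp hp with h' | h'
          · exact Or.inl h'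
          · exact hL' p h'
        · rw [List.foldr_cons, hfold, gext_p11, hnpX]
          exact Prod.ext rfl (funext fun i => (hβXval i).symm)
      · -- peel off a column (ones ℓ, ones ℓ)
        have hγlow : ∀ i, i < ℓ → 1 ≤ γ i := by
          intro i hi
          have h1 : γ j ≤ γ i := hγp.1 (by omega)
          omega
        have hγhigh : ∀ i, ℓ ≤ i → γ i = 0 := by
          intro i hi
          have h1 := (hlr i).1
          have h2 := hβhigh i hi
          omega
        have hβlow : ∀ i, i < ℓ → 1 ≤ β i := by
          intro i hi
          have := (specβ i).mpr hi
          omega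
        set γX : ℕ → ℕ := fun i => γ i - ones ℓ i with hγXdef
        set βX : ℕ → ℕ := fun i => β i - ones ℓ i with hβXdef
        have hγval : ∀ i, γ i = γX i + ones ℓ i := by
          intro i
          simp only [hγXdef, ones]
          split_ifs with h'
          · have := hγlow i h'
            omega
          · omega
        have hβval : ∀ i, β i = βX i + ones ℓ i := by
          intro i
          simp only [hβXdef, ones]
          split_ifs with h'
          · have := hβlow i h'
            omega
          · omega
        have hγXpart : IsPartition γX := by
          constructor
          · intro a b hab
            have h1 : γ b ≤ γ a := hγp.1 hab
            simp only [hγXdef, ones]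
            rcases lt_or_ge b ℓ with hb | hb
            · rw [if_pos hb, if_pos (by omega)]
              omega
            · have h2 : γ b = 0 := hγhigh b hb
              rw [if_neg (by omega)]
              omega
          · obtain ⟨M, hM⟩ := hγp.2
            exact ⟨M, fun n hn => by simp only [hγXdef]; rw [hM n hn]; omega⟩
        have hβXpart : IsPartition βX := by
          constructor
          · intro a b hab
            have h1 : β b ≤ β a := hβp.1 hab
            simp only [hβXdef, ones]
            rcases lt_or_ge b ℓ with hb | hb
            · rw [if_pos hb, if_pos (by omega)]
              omega
            · have h2 : β b = 0 := hβhigh b hb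
              rw [if_neg (by omega)]
              omega
          · exact ⟨N, fun n hn => by simp only [hβXdef]; rw [hN n hn]; omega⟩
        have hLRX : IsLRPair γX βX := by
          refine ⟨hγXpart, hβXpart, ?_⟩
          intro i
          have h1 := hlr i
          simp only [hγXdef, hβXdef, ones]
          split_ifs with h'
          · have := hγlow i h'
            omega
          · omega
        have hNX : ∀ n, N ≤ n → βX n = 0 := by
          intro n hn
          simp only [hβXdef]
          rw [hN n hn]
          omega
        have hℓN : ℓ ≤ N := by omega
        have hsum : psum β N = psum βX N + ℓ := by
          have : psum β N = psum βX N + psum (ones ℓ) N := by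
            rw [psum, psum, psum, ← Finset.sum_add_distrib]
            exact Finset.sum_congr rfl (fun i _ => hβval i)
          rw [this, psum_ones]
          omega
        obtain ⟨L', hL', hfold⟩ := ih N γX βX hLRX hNX (by omega)
        refine ⟨(ones ℓ, ones ℓ) :: L', ?_, ?_⟩
        · intro p hp
          rcases List.mem_cons.mp hp with h' | h'
          · exact Or.inr ⟨ℓ, hℓ1, h'⟩
          · exact hL' p h'
        · rw [List.foldr_cons, hfold, gext_ones]
          exact Prod.ext (funext fun i => (hγval i).symm)
            (funext fun i => (hβval i).symm)


/-- The monoid of LR-pairs under the generic-extension product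
(with identity the empty pair) is generated by `{(∅,(1))} ∪ {((1^n),(1^n)) : n ≥ 1}`:
every LR-pair is a finite iterated `*`-product of the pair of `P_1^1` and of the pairs
of `(P_0^1)^{⊕n}`, `n ≥ 1`. -/
theorem gext_monoid_generators (γ β : ℕ → ℕ) (h : IsLRPair γ β) :
    ∃ L : List ((ℕ → ℕ) × (ℕ → ℕ)),
      (∀ p ∈ L, p = p11 ∨ ∃ n, 1 ≤ n ∧ p = (ones n, ones n)) ∧
      L.foldr gext punit = (γ, β) := by
  obtain ⟨-, ⟨-, N, hN⟩, -⟩ := id h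
  exact main_aux (psum β N) N γ β h hN le_rfl

end LRGE
end

section
/- Let s, t ≥ 0 with s + t ≥ 1, let m_1 ≥ m_2 ≥ … ≥ m_s ≥ 2 be integers, and let ε_1, …, ε_{s+t} ∈ {0, 1}. Then, in terms of LR-pairs, [ ⊕_{i=1}^{s} P_{ε_i}^{m_i} ⊕ ⊕_{i=s+1}^{s+t} P_{ε_i}^{1} ] = [ (P_0^1)^{⊕s} ⊕ ⊕_{i=s+1}^{s+t} P_{ε_i}^{1} ] * [ ⊕_{i=1}^{s} P_{ε_i}^{m_i−1} ], where * is the generic-extension product. -/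
open Module

namespace LRGE


section Helpers

lemma sort_coe_of_sorted (L : List ℕ) (h : List.Pairwise (fun a b => b ≤ a) L) :
    Multiset.sort (↑L : Multiset ℕ) (· ≤ ·) = L.reverse := by
  refine List.Perm.eq_of_pairwise' (r := (· ≤ ·)) (Multiset.pairwise_sort _ _)
    (List.pairwise_reverse.mpr h) ?_
  exact (Multiset.coe_eq_coe.mp (by rw [Multiset.sort_eq])).trans L.reverse_perm.symm

lemma partOf_coe (L : List ℕ) (h : List.Pairwise (fun a b => b ≤ a) L) (i : ℕ) :
    partOf (↑L) i = L.getD i 0 := by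
  unfold partOf
  rw [sort_coe_of_sorted L h, List.reverse_reverse]

lemma partOf_eq_zero (M : Multiset ℕ) {i : ℕ} (h : Multiset.card M ≤ i) : partOf M i = 0 := by
  apply List.getD_eq_default
  simpa using h

lemma desc_sorted (M : Multiset ℕ) :
    List.Pairwise (fun a b : ℕ => b ≤ a) (M.sort (· ≤ ·)).reverse :=
  List.pairwise_reverse.mpr (Multiset.pairwise_sort _ _)

lemma coe_desc (M : Multiset ℕ) : (↑(M.sort (· ≤ ·)).reverse : Multiset ℕ) = M := by
  rw [← Multiset.coe_reverse, List.reverse_reverse, Multiset.sort_eq]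

lemma partOf_add (M N : Multiset ℕ) (h : ∀ a ∈ M, ∀ b ∈ N, b ≤ a) (i : ℕ) :
    partOf (M + N) i =
      if i < Multiset.card M then partOf M i else partOf N (i - Multiset.card M) := by
  set DM := (M.sort (· ≤ ·)).reverse with hDM
  set DN := (N.sort (· ≤ ·)).reverse with hDN
  have hM : (↑DM : Multiset ℕ) = M := coe_desc M
  have hN : (↑DN : Multiset ℕ) = N := coe_desc N
  have sMN : List.Pairwise (fun a b : ℕ => b ≤ a) (DM ++ DN) := by
    refine List.pairwise_append.mpr ⟨desc_sorted M, desc_sorted N, fun a ha b hb => ?_⟩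
    exact h a (by rw [← hM]; exact ha) b (by rw [← hN]; exact hb)
  have key : partOf (M + N) i = (DM ++ DN).getD i 0 := by
    rw [← hM, ← hN, show (↑DM + ↑DN : Multiset ℕ) = ↑(DM ++ DN) from rfl]
    exact partOf_coe _ sMN i
  have hlen : DM.length = Multiset.card M := by rw [← hM, Multiset.coe_card]
  rw [key]
  by_cases hi : i < Multiset.card M
  · rw [if_pos hi, List.getD_append _ _ _ _ (by omega)]; rfl
  · rw [if_neg hi, List.getD_append_right _ _ _ _ (by omega), hlen]; rfl

lemma getD_map_range (s : ℕ) (f : ℕ → ℕ) (i : ℕ) :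
    ((List.range s).map f).getD i 0 = if i < s then f i else 0 := by
  by_cases hi : i < s
  · rw [if_pos hi, List.getD_eq_getElem _ _ (by simpa using hi)]
    simp
  · rw [if_neg hi, List.getD_eq_default _ _ (by simpa using Nat.le_of_not_lt hi)]

lemma partOf_map_range (s : ℕ) (f : ℕ → ℕ) (hf : ∀ i j, i ≤ j → j < s → f j ≤ f i) (i : ℕ) :
    partOf ((Finset.range s).val.map f) i = if i < s then f i else 0 := by
  have h1 : (Finset.range s).val.map f = ↑((List.range s).map f) := rfl
  rw [h1, partOf_coe _ ?_ i, getD_map_range]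
  rw [List.pairwise_map]
  exact (List.pairwise_lt_range (n := s)).imp_of_mem (fun ha hb hab =>
    hf _ _ (Nat.le_of_lt hab) (List.mem_range.mp ‹_›))

lemma partOf_map_add_one (M : Multiset ℕ) (i : ℕ) :
    partOf (M.map (· + 1)) i = if i < Multiset.card M then partOf M i + 1 else 0 := by
  set DM := (M.sort (· ≤ ·)).reverse with hDM
  have hlen : DM.length = Multiset.card M := by rw [← coe_desc M, Multiset.coe_card]
  have h1 : M.map (· + 1) = ↑(DM.map (· + 1)) := by
    rw [← coe_desc M]; rfl
  have hs : List.Pairwise (fun a b : ℕ => b ≤ a) (DM.map (· + 1)) := by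
    rw [List.pairwise_map]
    exact (desc_sorted M).imp (by omega)
  rw [h1, partOf_coe _ hs i]
  by_cases hi : i < Multiset.card M
  · have hp : partOf M i = DM.getD i 0 := rfl
    rw [if_pos hi, List.getD_eq_getElem _ _ (by simp; omega), List.getElem_map, hp,
      List.getD_eq_getElem _ _ (by omega)]
  · rw [if_neg hi, List.getD_eq_default _ _ (by simp; omega)]

lemma getD_replicate_zero (z j : ℕ) : (List.replicate z (0:ℕ)).getD j 0 = 0 := by
  by_cases hj : j < z
  · rw [List.getD_eq_getElem _ _ (by simpa using hj)]; simp
  · rw [List.getD_eq_default _ _ (by simpa using Nat.le_of_not_lt hj)]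

lemma partOf_le_one (M : Multiset ℕ) (h : ∀ a ∈ M, a ≤ 1) :
    partOf M = ones M.sum := by
  set c := M.count 1 with hc
  set z := M.count 0 with hz
  have hM : M = Multiset.replicate c 1 + Multiset.replicate z 0 := by
    ext a
    rw [Multiset.count_add, Multiset.count_replicate, Multiset.count_replicate]
    by_cases h1 : a = 1
    · simp [h1, hc]
    · by_cases h0 : a = 0
      · simp [h0, hz]
      · rw [if_neg (fun hh : (1:ℕ) = a => h1 hh.symm), if_neg (fun hh : (0:ℕ) = a => h0 hh.symm),
          Multiset.count_eq_zero_of_notMem]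
        intro hm
        have := h a hm
        omega
  have hsum : M.sum = c := by
    rw [hM]
    simp
  have hcoe : M = ((List.replicate c 1 ++ List.replicate z 0 : List ℕ) : Multiset ℕ) := by
    rw [hM, show ((List.replicate c 1 ++ List.replicate z 0 : List ℕ) : Multiset ℕ)
      = ↑(List.replicate c 1) + ↑(List.replicate z 0) from rfl,
      Multiset.coe_replicate, Multiset.coe_replicate]
  have hsrt : List.Pairwise (fun a b : ℕ => b ≤ a) (List.replicate c 1 ++ List.replicate z 0) := by
    refine List.pairwise_append.mpr ⟨?_, ?_, ?_⟩
    · exact List.pairwise_replicate.mpr (Or.inr le_rfl)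
    · exact List.pairwise_replicate.mpr (Or.inr le_rfl)
    · intro a ha b hb
      rw [List.eq_of_mem_replicate ha, List.eq_of_mem_replicate hb]
      omega
  funext i
  rw [hsum, hcoe, partOf_coe _ hsrt i, ones]
  by_cases hi : i < c
  · rw [if_pos hi, List.getD_append _ _ _ _ (by simpa using hi),
      List.getD_eq_getElem _ _ (by simpa using hi)]
    simp
  · rw [if_neg hi, List.getD_append_right _ _ _ _ (by simpa using Nat.le_of_not_lt hi)]
    simp [getD_replicate_zero]

lemma map_range_add (f : ℕ → ℕ) (s t : ℕ) :
    (Finset.range (s+t)).val.map f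
      = (Finset.range s).val.map f + (Finset.range t).val.map (fun j => f (s + j)) := by
  rw [Finset.range_val, Finset.range_val, Finset.range_val, Multiset.range_add,
    Multiset.map_add, Multiset.map_map]
  rfl

end Helpers

/-- For `s + t ≥ 1`, `m_1 ≥ … ≥ m_s ≥ 2` and `ε_i ∈ {0,1}`:
`[⊕_{i=1}^{s} P_{ε_i}^{m_i} ⊕ ⊕_{i=s+1}^{s+t} P_{ε_i}^1]
  = [(P_0^1)^{⊕s} ⊕ ⊕_{i=s+1}^{s+t} P_{ε_i}^1] * [⊕_{i=1}^{s} P_{ε_i}^{m_i - 1}]`,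
where each side is the LR-pair whose β-partition has the indicated multiset of parts
`{m_i}` and whose γ-partition has the multiset of parts `{m_i - ε_i}` (rearranged in
weakly decreasing order, via `partOf`). -/
theorem picket_factorization (s t : ℕ) (hst : 1 ≤ s + t)
    (m : ℕ → ℕ) (hm2 : ∀ i, i < s → 2 ≤ m i)
    (hmono : ∀ i j, i ≤ j → j < s → m j ≤ m i)
    (ε : ℕ → ℕ) (hε : ∀ i, i < s + t → ε i ≤ 1) :
    -- the LR-pair of `⊕_{i=1}^{s} P_{ε_i}^{m_i} ⊕ ⊕_{i=s+1}^{s+t} P_{ε_i}^1`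
    (partOf ((Finset.range (s + t)).val.map (fun i => (if i < s then m i else 1) - ε i)),
      partOf ((Finset.range (s + t)).val.map (fun i => if i < s then m i else 1)))
    =
    gext
      -- `Y = (P_0^1)^{⊕s} ⊕ ⊕_{i=s+1}^{s+t} P_{ε_i}^1`
      (partOf (Multiset.replicate s 1 + (Finset.Ico s (s + t)).val.map (fun i => 1 - ε i)),
        partOf (Multiset.replicate (s + t) 1))
      -- `X = ⊕_{i=1}^{s} P_{ε_i}^{m_i - 1}`
      (partOf ((Finset.range s).val.map (fun i => m i - 1 - ε i)),
        partOf ((Finset.range s).val.map (fun i => m i - 1))) := by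
  classical
  have hIco : (Finset.Ico s (s+t)).val.map (fun i => 1 - ε i)
      = (Finset.range t).val.map (fun j => 1 - ε (s + j)) := by
    have h1 : Finset.Ico s (s+t) = Finset.map (addLeftEmbedding s) (Finset.range t) := by
      rw [Finset.range_eq_Ico, Finset.map_add_left_Ico]
      simp
    rw [h1, Finset.map_val, Multiset.map_map]
    exact Multiset.map_congr rfl (fun x hx => by simp [addLeftEmbedding_apply])
  set NN := (Finset.range t).val.map (fun j => 1 - ε (s + j)) with hNN
  set c := NN.sum with hc
  have hNN1 : ∀ a ∈ NN, a ≤ 1 := by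
    intro a ha
    obtain ⟨j, hj, rfl⟩ := Multiset.mem_map.mp ha
    omega
  have hct : c ≤ t := by
    rw [hc, hNN]
    have h1 := Multiset.sum_map_le_sum_map (fun j => 1 - ε (s+j)) (fun _ => 1)
      (s := (Finset.range t).val) (fun i _ => by show 1 - ε (s + i) ≤ 1; omega)
    simpa [Multiset.map_const, Multiset.sum_replicate] using h1
  -- computed partitions
  have hβX : partOf ((Finset.range s).val.map (fun i => m i - 1))
      = fun i => if i < s then m i - 1 else 0 :=
    funext (partOf_map_range s _ (fun i j hij hj => by have := hmono i j hij hj; omega))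
  have hmemY : ∀ a ∈ Multiset.replicate s 1 + NN, a ≤ 1 := by
    intro a ha
    rcases Multiset.mem_add.mp ha with h | h
    · rw [Multiset.eq_of_mem_replicate h]
    · exact hNN1 a h
  have hY1 : partOf (Multiset.replicate s 1 + NN) = ones (s + c) := by
    have h1 := partOf_le_one _ hmemY
    rwa [Multiset.sum_add, Multiset.sum_replicate, smul_eq_mul, mul_one, ← hc] at h1
  have hY2 : partOf (Multiset.replicate (s+t) 1) = ones (s+t) := by
    have h1 := partOf_le_one (Multiset.replicate (s+t) 1)
      (fun a ha => by rw [Multiset.eq_of_mem_replicate ha])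
    rwa [Multiset.sum_replicate, smul_eq_mul, mul_one] at h1
  have hNNP : partOf NN = ones c := by
    have h1 := partOf_le_one NN hNN1
    rwa [← hc] at h1
  have hcards : Multiset.card ((Finset.range s).val.map (fun i => m i - 1 - ε i)) = s := by simp
  -- multiset splittings
  have hsplitγ : (Finset.range (s+t)).val.map (fun i => (if i < s then m i else 1) - ε i)
      = ((Finset.range s).val.map (fun i => m i - 1 - ε i)).map (· + 1) + NN := by
    rw [map_range_add, Multiset.map_map]
    congr 1
    · refine Multiset.map_congr rfl (fun x hx => ?_)
      rw [Finset.mem_val, Finset.mem_range] at hx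
      have h2 := hm2 x hx
      have he := hε x (by omega)
      simp only [Function.comp, if_pos hx]
      omega
    · refine Multiset.map_congr rfl (fun x hx => ?_)
      have hns : ¬ (s + x < s) := by omega
      simp [hns]
  have hsplitβ : (Finset.range (s+t)).val.map (fun i => if i < s then m i else 1)
      = (Finset.range s).val.map m + Multiset.replicate t 1 := by
    rw [map_range_add]
    congr 1
    · refine Multiset.map_congr rfl (fun x hx => ?_)
      rw [Finset.mem_val, Finset.mem_range] at hx
      simp [hx]
    · have h1 : Multiset.map (fun j => if s + j < s then m (s + j) else 1) (Finset.range t).val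
          = Multiset.map (Function.const ℕ 1) (Finset.range t).val :=
        Multiset.map_congr rfl (fun x _ => by simp)
      rw [h1, Multiset.map_const]
      simp
  -- the γ-component
  have hγ : partOf ((Finset.range (s+t)).val.map (fun i => (if i < s then m i else 1) - ε i))
      = fun i => partOf ((Finset.range s).val.map (fun i => m i - 1 - ε i)) i + ones (s+c) i := by
    funext i
    have hmem : ∀ a ∈ ((Finset.range s).val.map (fun i => m i - 1 - ε i)).map (· + 1),
        ∀ b ∈ NN, b ≤ a := by
      intro a ha b hb
      obtain ⟨x, hx, rfl⟩ := Multiset.mem_map.mp ha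
      have := hNN1 b hb
      omega
    rw [hsplitγ, partOf_add _ _ hmem i, Multiset.card_map, hcards, partOf_map_add_one, hcards,
      hNNP]
    by_cases hi : i < s
    · simp only [if_pos hi, ones, if_pos (show i < s + c by omega)]
    · have hz : partOf (Multiset.map (fun i => m i - 1 - ε i) (Finset.range s).val) i = 0 :=
        partOf_eq_zero _ (by rw [hcards]; omega)
      rw [if_neg hi, hz]
      simp only [ones]
      split_ifs <;> omega
  -- the β-component
  have hMm : partOf ((Finset.range s).val.map m) = fun i => if i < s then m i else 0 :=
    funext (partOf_map_range s m hmono)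
  have hrep : partOf (Multiset.replicate t 1) = ones t := by
    have h1 := partOf_le_one (Multiset.replicate t 1)
      (fun a ha => by rw [Multiset.eq_of_mem_replicate ha])
    rwa [Multiset.sum_replicate, smul_eq_mul, mul_one] at h1
  have hβZ : partOf ((Finset.range (s+t)).val.map (fun i => if i < s then m i else 1))
      = fun i => if i < s then m i else ones t (i - s) := by
    funext i
    have hmem : ∀ a ∈ (Finset.range s).val.map m, ∀ b ∈ Multiset.replicate t 1, b ≤ a := by
      intro a ha b hb
      obtain ⟨x, hx, rfl⟩ := Multiset.mem_map.mp ha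
      rw [Finset.mem_val, Finset.mem_range] at hx
      rw [Multiset.eq_of_mem_replicate hb]
      have := hm2 x hx
      omega
    have hcm : Multiset.card ((Finset.range s).val.map m) = s := by simp
    rw [hsplitβ, partOf_add _ _ hmem i, hcm, hMm, hrep]
    by_cases hi : i < s <;> simp [hi]
  have hnp : numParts (fun i => if i < s then m i - 1 else 0) = s := by
    have hset : {i | (if i < s then m i - 1 else 0) ≠ 0} = Set.Iio s := by
      ext j
      simp only [Set.mem_setOf_eq, Set.mem_Iio]
      by_cases hj : j < s
      · have := hm2 j hj
        simp only [if_pos hj]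
        omega
      · simp [hj]
    unfold numParts
    rw [hset, ← Finset.coe_Iio, Set.ncard_coe_finset, Nat.card_Iio]
  have hdiff : ∀ k, ∑ i ∈ Finset.range k, (ones (s+t) i - ones (s+c) i)
      = min k (s+t) - min k (s+c) := by
    intro k
    rw [Finset.sum_tsub_distrib _ (fun i _ => by
      simp only [ones]; split_ifs <;> omega)]
    have h1 : ∑ i ∈ Finset.range k, ones (s+t) i = min k (s+t) := psum_ones _ _
    have h2 : ∑ i ∈ Finset.range k, ones (s+c) i = min k (s+c) := psum_ones _ _
    rw [h1, h2]
  have hgb : ∀ k, gbsum (fun i => if i < s then m i - 1 else 0) (ones (s+c)) (ones (s+t)) k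
      = psum (fun i => if i < s then m i - 1 else 0) k + min k (s+t) := by
    intro k
    unfold gbsum
    rw [hnp, hdiff k]
    have h2 : psum (ones (s+c)) k = min k (s+c) := psum_ones _ _
    rw [h2]
    omega
  -- conclude
  rw [hIco]
  refine Prod.ext ?_ ?_
  · show _ = fun i => partOf ((Finset.range s).val.map (fun i => m i - 1 - ε i)) i
      + partOf (Multiset.replicate s 1 + NN) i
    rw [hY1]
    exact hγ
  · show _ = geBeta (partOf ((Finset.range s).val.map (fun i => m i - 1)))
      (partOf (Multiset.replicate s 1 + NN)) (partOf (Multiset.replicate (s+t) 1))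
    rw [hY1, hY2, hβX, hβZ]
    funext i
    unfold geBeta
    rw [hgb, hgb]
    have hstep : psum (fun i => if i < s then m i - 1 else 0) (i+1)
        = psum (fun i => if i < s then m i - 1 else 0) i + (if i < s then m i - 1 else 0) :=
      Finset.sum_range_succ _ _
    rw [hstep]
    by_cases hi : i < s
    · have := hm2 i hi
      simp only [if_pos hi]
      omega
    · simp only [if_neg hi, ones]
      split_ifs <;> omega


end LRGE
end
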